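/- Let G = ([n], E) be a graph and consider the max-min pricing instance with marginals F_1(G),...,F_n(G) defined from G. If M is a maximum independent set of G, then the optimal robust revenue guarantee satisfies R*(G) ≤ (|M| + 2)·√n + 3n·2^{-n}. -/

import Mathlib

open MeasureTheory
open scoped ENNReal NNReal

noncomputable section

/-- A buyer's purchase rule for `n` items: given a valuation profile and a vector of item prices
(in `[0,∞]`), `choose` returns the purchased item (or `none` if nothing is purchased).
The axioms say: a purchased item has a finite price and yields nonnegative utility
(`feasible`), the purchased item maximizes utility among all items (`optimal`), and the buyer
does purchase whenever some item yields nonnegative utility (`active`). Ties among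
utility-maximizing items are broken according to the (fixed) rule embodied by `choose`. -/
structure BuyerRule (n : ℕ) where
  choose : (Fin n → ℝ) → (Fin n → ℝ≥0∞) → Option (Fin n)
  feasible : ∀ v p j, choose v p = some j → p j ≠ ⊤ ∧ (p j).toReal ≤ v j
  optimal : ∀ v p j k, choose v p = some j → p k ≠ ⊤ →
      v k - (p k).toReal ≤ v j - (p j).toReal
  active : ∀ v p, (∃ k, p k ≠ ⊤ ∧ (p k).toReal ≤ v k) → (choose v p).isSome = true

/-- The seller's revenue from valuation profile `v` under pricing `p`. -/
def BuyerRule.revenue {n : ℕ} (B : BuyerRule n) (p : Fin n → ℝ≥0∞) (v : Fin n → ℝ) : ℝ≥0∞ :=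
  (B.choose v p).elim 0 (fun j => p j)

/-- A joint distribution `F` on valuation profiles is compatible with the marginals `marg`
if it is a probability measure whose `j`-th one-dimensional marginal is `marg j` for every `j`. -/
def Compatible {n : ℕ} (marg : Fin n → Measure ℝ) (F : Measure (Fin n → ℝ)) : Prop :=
  IsProbabilityMeasure F ∧ ∀ j, F.map (fun v => v j) = marg j

/-- `R(p,F)`: the expected revenue of pricing `p` under joint distribution `F`. -/
def expRev {n : ℕ} (B : BuyerRule n) (p : Fin n → ℝ≥0∞) (F : Measure (Fin n → ℝ)) : ℝ≥0∞ :=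
  ∫⁻ v, B.revenue p v ∂F

/-- `R(p)`: the robust revenue guarantee of `p`, the infimum of `R(p,F)` over compatible `F`. -/
def robustRev {n : ℕ} (B : BuyerRule n) (marg : Fin n → Measure ℝ) (p : Fin n → ℝ≥0∞) : ℝ≥0∞ :=
  ⨅ (F : Measure (Fin n → ℝ)) (_ : Compatible marg F), expRev B p F

/-- `R*`: the optimal robust revenue guarantee over all pricings. -/
def optRobust {n : ℕ} (B : BuyerRule n) (marg : Fin n → Measure ℝ) : ℝ≥0∞ :=
  ⨆ p : Fin n → ℝ≥0∞, robustRev B marg p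

/-- The marginal distribution `F_i(G)` of the hardness instance built from the graph `G`
(item `i : Fin n` represents the vertex `i+1 ∈ [n]` of the paper): it takes the value
`2^((i+1)·n)` with probability `2^(-(i+1)·n)`; additionally, for each vertex `j > i` adjacent
to `i`, it takes the value `2^((j+1)·n)` with probability `2^(-(j+1)·n)/√n`; with all remaining
probability it takes the value `0`. -/
def margG (n : ℕ) (G : SimpleGraph (Fin n)) [DecidableRel G.Adj] (i : Fin n) : Measure ℝ :=
  ENNReal.ofReal (((2 : ℝ) ^ (((i : ℕ) + 1) * n))⁻¹) •
      Measure.dirac ((2 : ℝ) ^ (((i : ℕ) + 1) * n))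
    + (∑ j : Fin n,
        if i < j ∧ G.Adj i j then
          ENNReal.ofReal ((((2 : ℝ) ^ (((j : ℕ) + 1) * n))⁻¹) / Real.sqrt n) •
            Measure.dirac ((2 : ℝ) ^ (((j : ℕ) + 1) * n))
        else 0)
    + (1 - ENNReal.ofReal (((2 : ℝ) ^ (((i : ℕ) + 1) * n))⁻¹)
        - ∑ j : Fin n,
            if i < j ∧ G.Adj i j then
              ENNReal.ofReal ((((2 : ℝ) ^ (((j : ℕ) + 1) * n))⁻¹) / Real.sqrt n)
            else 0) •
        Measure.dirac (0 : ℝ)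

/-!
Fix a pricing `p` and let `m = √n`. Call item `i` cheap if `p i ≤ 2^((i+1)n)`. The adversary
lets `v j = 2^((j+1)n)` with probability `2^(-(j+1)n)` and splits this event into `m` equally
likely slots; each lower neighbour `i` of `j` joins exactly one slot, where it also gets value
`2^((j+1)n)`. Whatever the assignment of neighbours to slots, this reproduces the marginals
`F_i(G)`. A slot containing a cheap neighbour `i` earns at most `p i ≤ 2^(-n) 2^((j+1)n)`, so
only the other slots count, each for at most `1/m`. Spreading the `d j` cheap lower neighbours
of `j` over `min (d j) m` slots and putting all other neighbours into one slot leaves at most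
`m - d j + 1` such slots when `j` is cheap and at most one otherwise. Finally
`∑_{j cheap} (m - d j) ≤ α(G) m²`: the cheap `j` with `d j ≤ k` span a graph in which every
vertex has at most `k` smaller neighbours, so it is greedily `(k+1)`-colourable and has at most
`(k+1) α(G)` vertices.
-/

open Finset

namespace SimpleGraph

variable {V : Type*} [LinearOrder V] (G : SimpleGraph V) [DecidableRel G.Adj]

theorem exists_coloring_of_card_lower_adj_le (k : ℕ) (T : Finset V)
    (hT : ∀ j ∈ T, #{i ∈ T | i < j ∧ G.Adj i j} ≤ k) :
    ∃ c : V → Fin (k + 1), ∀ a ∈ T, ∀ b ∈ T, G.Adj a b → c a ≠ c b := by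
  induction T using Finset.induction_on_max with
  | empty => exact ⟨0, by simp⟩
  | insert a s hlt ih =>
    obtain ⟨c, hc⟩ := ih fun j hj => (card_le_card (filter_subset_filter _
      (subset_insert a s))).trans (hT j (mem_insert_of_mem hj))
    have hfree : #({i ∈ s | G.Adj i a}.image c) < #(univ : Finset (Fin (k + 1))) := by
      rw [card_univ, Fintype.card_fin]
      refine card_image_le.trans_lt (Nat.lt_succ_of_le ((card_le_card ?_).trans
        (hT a (mem_insert_self a s))))
      intro i hi
      simp only [mem_filter] at hi ⊢
      exact ⟨mem_insert_of_mem hi.1, hlt i hi.1, hi.2⟩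
    obtain ⟨col, -, hcol⟩ := exists_mem_notMem_of_card_lt_card hfree
    have hne : ∀ x ∈ s, x ≠ a := fun x hx => (hlt x hx).ne
    have hcol' : ∀ x ∈ s, G.Adj x a → c x ≠ col := fun x hx hxa h =>
      hcol (mem_image.mpr ⟨x, mem_filter.mpr ⟨hx, hxa⟩, h⟩)
    refine ⟨Function.update c a col, fun x hx y hy hxy => ?_⟩
    rcases mem_insert.mp hx with rfl | hxs <;> rcases mem_insert.mp hy with rfl | hys
    · exact (G.irrefl hxy).elim
    · rw [Function.update_self, Function.update_of_ne (hne y hys)]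
      exact (hcol' y hys hxy.symm).symm
    · rw [Function.update_self, Function.update_of_ne (hne x hxs)]
      exact hcol' x hxs hxy
    · rw [Function.update_of_ne (hne x hxs), Function.update_of_ne (hne y hys)]
      exact hc x hxs y hys hxy

theorem card_le_mul_of_card_lower_adj_le {α k : ℕ} (T : Finset V)
    (hα : ∀ S : Finset V, (∀ a ∈ S, ∀ b ∈ S, ¬ G.Adj a b) → #S ≤ α)
    (hT : ∀ j ∈ T, #{i ∈ T | i < j ∧ G.Adj i j} ≤ k) :
    #T ≤ (k + 1) * α := by
  obtain ⟨c, hc⟩ := G.exists_coloring_of_card_lower_adj_le k T hT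
  calc #T = ∑ col, #{a ∈ T | c a = col} := card_eq_sum_card_fiberwise fun _ _ => mem_univ _
    _ ≤ ∑ _col : Fin (k + 1), α := sum_le_sum fun col _ => hα _ fun a ha b hb hab =>
        hc a (mem_filter.mp ha).1 b (mem_filter.mp hb).1 hab
          ((mem_filter.mp ha).2.trans (mem_filter.mp hb).2.symm)
    _ = (k + 1) * α := by simp

theorem sum_tsub_card_lower_adj_le {α : ℕ} (L : Finset V)
    (hα : ∀ S : Finset V, (∀ a ∈ S, ∀ b ∈ S, ¬ G.Adj a b) → #S ≤ α) (m : ℕ) :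
    ∑ j ∈ L, (m - #{i ∈ L | i < j ∧ G.Adj i j}) ≤ α * (m * m) := by
  set d : V → ℕ := fun j => #{i ∈ L | i < j ∧ G.Adj i j}
  have layer_cake : ∀ j, m - d j = #{k ∈ range m | d j ≤ k} := fun j => by
    rw [range_eq_Ico, Ico_filter_le, Nat.card_Ico, Nat.zero_max]
  calc ∑ j ∈ L, (m - d j) = ∑ k ∈ range m, #{j ∈ L | d j ≤ k} := by
        simp_rw [layer_cake]
        exact sum_card_bipartiteAbove_eq_sum_card_bipartiteBelow _
    _ ≤ ∑ _k ∈ range m, m * α := by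
        refine sum_le_sum fun k hk =>
          (G.card_le_mul_of_card_lower_adj_le _ hα fun j hj => ?_).trans
            (Nat.mul_le_mul_right _ (mem_range.mp hk))
        exact (card_le_card (filter_subset_filter _ (filter_subset _ L))).trans
          (mem_filter.mp hj).2
    _ = α * (m * m) := by rw [sum_const, card_range, smul_eq_mul]; ring

end SimpleGraph

theorem Finset.exists_min_card_le_card_image {V : Type*} [DecidableEq V] (s : Finset V) (m : ℕ)
    [NeZero m] : ∃ l : V → Fin m, min #s m ≤ #(s.image l) ∧ ∀ i ∉ s, l i = 0 := by
  obtain ⟨T, hTs, hT⟩ := s.exists_subset_card_eq (min_le_left #s m)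
  let e : Fin #T ↪ Fin m := Fin.castLEEmb (hT ▸ min_le_right #s m)
  set l : V → Fin m := fun i => if h : i ∈ T then e (T.equivFin ⟨i, h⟩) else 0
  have hinj : Set.InjOn l T := fun x hx y hy hxy => by
    simpa [l, dif_pos (show x ∈ T from hx), dif_pos (show y ∈ T from hy)] using hxy
  refine ⟨l, ?_, fun i hi => by simp [l, show i ∉ T from fun h => hi (hTs h)]⟩
  calc min #s m = #(T.image l) := hT ▸ (card_image_of_injOn hinj).symm
    _ ≤ #(s.image l) := card_le_card (image_subset_image hTs)

namespace BuyerRule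

variable {n : ℕ} (B : BuyerRule n) (p : Fin n → ℝ≥0∞) (v : Fin n → ℝ)

theorem revenue_le_of_forall_affordable {c : ℝ≥0∞}
    (h : ∀ k, p k ≠ ⊤ → (p k).toReal ≤ v k → p k ≤ c) : B.revenue p v ≤ c := by
  unfold revenue
  rcases hk : B.choose v p with _ | k
  · exact zero_le
  · exact h k (B.feasible v p k hk).1 (B.feasible v p k hk).2

theorem revenue_le_ofReal {c : ℝ} (h : ∀ k, v k ≤ c) : B.revenue p v ≤ ENNReal.ofReal c :=
  B.revenue_le_of_forall_affordable p v fun k hk hle =>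
    ENNReal.ofReal_toReal hk ▸ ENNReal.ofReal_le_ofReal (hle.trans (h k))

theorem revenue_le_price {i : Fin n} (h : ∀ k, v k ≤ v i) : B.revenue p v ≤ p i := by
  unfold revenue
  rcases hk : B.choose v p with _ | k
  · exact zero_le
  by_cases hi : p i = ⊤
  · simp [hi]
  have hopt := B.optimal v p k i hk hi
  have hk' := h k
  exact (ENNReal.toReal_le_toReal (B.feasible v p k hk).1 hi).mp (by linarith)

theorem revenue_zero : B.revenue p 0 = 0 :=
  nonpos_iff_eq_zero.mp (ENNReal.ofReal_zero ▸ B.revenue_le_ofReal p 0 fun _ => le_rfl)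

end BuyerRule

def profile {ι : Type*} [DecidableEq ι] (a : ℝ) (A : Finset ι) : ι → ℝ :=
  fun k => if k ∈ A then a else 0

namespace BuyerRule

variable {n : ℕ} (B : BuyerRule n) (p : Fin n → ℝ≥0∞) {a : ℝ} {A : Finset (Fin n)}

theorem revenue_profile_le (ha : 0 ≤ a) : B.revenue p (profile a A) ≤ ENNReal.ofReal a :=
  B.revenue_le_ofReal p _ fun k => by unfold profile; split_ifs <;> simp [ha]

theorem revenue_profile_le_price (ha : 0 ≤ a) {i : Fin n} (hi : i ∈ A) :
    B.revenue p (profile a A) ≤ p i :=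
  B.revenue_le_price p _ fun k => by unfold profile; split_ifs <;> simp [ha]

theorem revenue_profile_eq_zero (h : ∀ k ∈ A, ENNReal.ofReal a < p k) :
    B.revenue p (profile a A) = 0 := by
  refine nonpos_iff_eq_zero.mp (B.revenue_le_of_forall_affordable p _ fun k hk hle => ?_)
  unfold profile at hle
  split_ifs at hle with hkA
  · exact absurd (ENNReal.ofReal_toReal hk ▸ ENNReal.ofReal_le_ofReal hle) (h k hkA).not_ge
  · exact (ENNReal.toReal_eq_zero_iff _ |>.mp (le_antisymm hle ENNReal.toReal_nonneg)).resolve_right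
      hk |>.le

end BuyerRule

namespace MeasureTheory.Measure

theorem map_eval_sum_smul_dirac_profile {ι κ : Type*} [DecidableEq ι] (s : Finset κ)
    (c : κ → ℝ≥0∞) (A : κ → Finset ι) (a : ℝ) (i : ι) :
    (∑ t ∈ s, c t • dirac (profile a (A t))).map (fun v => v i) =
      (∑ t ∈ s with i ∈ A t, c t) • dirac a + (∑ t ∈ s with i ∉ A t, c t) • dirac 0 := by
  have hi : Measurable fun v : ι → ℝ => v i := measurable_pi_apply i
  rw [map_finset_sum hi.aemeasurable, sum_filter, sum_filter, sum_smul, sum_smul,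
    ← sum_add_distrib]
  refine Finset.sum_congr rfl fun t _ => ?_
  rw [Measure.map_smul, map_dirac' hi, profile]
  split_ifs <;> simp

theorem eq_add_one_sub_smul_dirac {α : Type*} [MeasurableSpace α] {μ ν : Measure α}
    [IsProbabilityMeasure μ] [IsFiniteMeasure ν] {c : ℝ≥0∞} {x : α} (h : μ = ν + c • dirac x) :
    μ = ν + (1 - ν Set.univ) • dirac x := by
  have hsum : ν Set.univ + c = 1 := by simpa [h] using measure_univ (μ := μ)
  rw [h, ← hsum, ENNReal.add_sub_cancel_left (measure_ne_top ν _)]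

end MeasureTheory.Measure

namespace MaxMinPricing

variable {n m : ℕ}

def level (n k : ℕ) : ℝ := 2 ^ ((k + 1) * n)

def slotMass (n k : ℕ) : ℝ≥0∞ := ENNReal.ofReal ((level n k)⁻¹ / Real.sqrt n)

theorem level_pos (n k : ℕ) : 0 < level n k := by unfold level; positivity

theorem level_mul_two_pow_le {i j : ℕ} (hij : i < j) : level n i * 2 ^ n ≤ level n j := by
  unfold level
  rw [← pow_add]
  exact pow_le_pow_right₀ one_le_two (by nlinarith)

theorem sum_ofReal_inv_level_le_one : ∑ j : Fin n, ENNReal.ofReal (level n j)⁻¹ ≤ 1 := by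
  rw [← ENNReal.ofReal_sum_of_nonneg (f := fun j : Fin n => (level n j)⁻¹) fun j _ =>
    (inv_pos.mpr (level_pos n j)).le, ← ENNReal.ofReal_one]
  refine ENNReal.ofReal_le_ofReal ?_
  calc ∑ j : Fin n, (level n j)⁻¹ ≤ ∑ j : Fin n, (1 / 2 : ℝ) ^ (j : ℕ) / 2 := by
        refine sum_le_sum fun j _ => ?_
        rw [level, div_pow, one_pow, div_div, ← pow_succ, one_div]
        exact inv_anti₀ (by positivity) (pow_le_pow_right₀ one_le_two
          (Nat.le_mul_of_pos_right _ j.pos))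
    _ = (∑ k ∈ range n, (1 / 2 : ℝ) ^ k) / 2 := by
        rw [Fin.sum_univ_eq_sum_range (fun k => (1 / 2 : ℝ) ^ k / 2), sum_div]
    _ ≤ 1 := by linarith [sum_geometric_two_le n]

theorem natCast_mul_ofReal_div_sqrt [NeZero m] (hm : Real.sqrt n = m) (x : ℝ) :
    (m : ℝ≥0∞) * ENNReal.ofReal (x / Real.sqrt n) = ENNReal.ofReal x := by
  rw [hm, ← ENNReal.ofReal_natCast, ← ENNReal.ofReal_mul m.cast_nonneg,
    mul_div_cancel₀ _ (Nat.cast_ne_zero.mpr (NeZero.ne m))]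

theorem slotMass_mul_ofReal_level (j : ℕ) (x : ℝ) :
    slotMass n j * ENNReal.ofReal (level n j * x) = ENNReal.ofReal (x / Real.sqrt n) := by
  rw [slotMass, ← ENNReal.ofReal_mul (by have := level_pos n j; positivity)]
  congr 1
  field_simp [(level_pos n j).ne']

variable (G : SimpleGraph (Fin n)) [DecidableRel G.Adj]

def slot (l : Fin n → Fin m) (j : Fin n) (t : Fin m) : Finset (Fin n) :=
  {i | i < j ∧ G.Adj i j ∧ l i = t}

def adversary (l : Fin n → Fin n → Fin m) : Measure (Fin n → ℝ) :=
  (∑ j : Fin n, ∑ t : Fin m,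
      slotMass n j • Measure.dirac (profile (level n j) (insert j (slot G (l j) j t))))
    + (1 - ∑ j : Fin n, ENNReal.ofReal (level n j)⁻¹) • Measure.dirac 0

def margGNonzero (i : Fin n) : Measure ℝ :=
  ENNReal.ofReal (level n i)⁻¹ • Measure.dirac (level n i)
    + ∑ j, if i < j ∧ G.Adj i j then slotMass n j • Measure.dirac (level n j) else 0

theorem margG_eq_margGNonzero_add (i : Fin n) :
    margG n G i = margGNonzero G i + (1 - margGNonzero G i Set.univ) • Measure.dirac 0 := by
  simp only [margGNonzero, Measure.add_apply, Measure.smul_apply, measure_univ, smul_eq_mul,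
    mul_one, Measure.coe_finsetSum, Finset.sum_apply,
    apply_ite (fun μ : Measure ℝ => μ Set.univ), Measure.coe_zero, Pi.zero_apply]
  rw [← tsub_tsub]
  rfl

theorem isProbabilityMeasure_adversary [NeZero m] (hm : Real.sqrt n = m)
    (l : Fin n → Fin n → Fin m) : IsProbabilityMeasure (adversary G l) := by
  constructor
  simp only [adversary, Measure.add_apply, Measure.smul_apply, measure_univ, smul_eq_mul, mul_one,
    Measure.coe_finsetSum, Finset.sum_apply, sum_const, card_univ, Fintype.card_fin,
    nsmul_eq_mul]
  simp_rw [slotMass, natCast_mul_ofReal_div_sqrt hm]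
  exact add_tsub_cancel_of_le sum_ofReal_inv_level_le_one

theorem sum_slotMass_filter_mem [NeZero m] (hm : Real.sqrt n = m) (l : Fin n → Fin m)
    (i j : Fin n) :
    ∑ t with i ∈ insert j (slot G l j t), slotMass n j =
      if i = j then ENNReal.ofReal (level n j)⁻¹
      else if i < j ∧ G.Adj i j then slotMass n j else 0 := by
  simp only [slot, mem_insert, mem_filter, mem_univ, true_and]
  split_ifs with hij hadj
  · simp [hij, slotMass, natCast_mul_ofReal_div_sqrt hm]
  · simp [hij, hadj, filter_eq]
  · exact sum_eq_zero fun t ht => absurd (mem_filter.mp ht).2 (by tauto)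

theorem exists_map_eval_adversary_eq [NeZero m] (hm : Real.sqrt n = m)
    (l : Fin n → Fin n → Fin m) (i : Fin n) :
    ∃ c : ℝ≥0∞, (adversary G l).map (fun v => v i) = margGNonzero G i + c • Measure.dirac 0 := by
  have hi : Measurable fun v : Fin n → ℝ => v i := measurable_pi_apply i
  have hnonzero : ∑ j : Fin n, (if i = j then ENNReal.ofReal (level n j)⁻¹
      else if i < j ∧ G.Adj i j then slotMass n j else 0) • Measure.dirac (level n j) =
      margGNonzero G i := by
    rw [margGNonzero, ← sum_ite_eq_of_mem univ i (fun j : Fin n =>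
      ENNReal.ofReal (level n j)⁻¹ • Measure.dirac (level n j)) (mem_univ i), ← sum_add_distrib]
    refine Finset.sum_congr rfl fun j _ => ?_
    split_ifs with hij hadj hadj <;> simp_all
  rw [adversary, Measure.map_add _ _ hi, Measure.map_finset_sum hi.aemeasurable,
    Measure.map_smul, Measure.map_dirac' hi]
  simp only [Measure.map_eval_sum_smul_dirac_profile, sum_slotMass_filter_mem G hm,
    sum_add_distrib, hnonzero, ← sum_smul, Pi.zero_apply, add_assoc, ← add_smul]
  exact ⟨_, rfl⟩

theorem compatible_adversary [NeZero m] (hm : Real.sqrt n = m) (l : Fin n → Fin n → Fin m) :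
    Compatible (margG n G) (adversary G l) := by
  have := isProbabilityMeasure_adversary G hm l
  refine ⟨this, fun i => ?_⟩
  obtain ⟨c, hc⟩ := exists_map_eval_adversary_eq G hm l i
  have := Measure.isProbabilityMeasure_map (μ := adversary G l) (measurable_pi_apply i).aemeasurable
  have : IsFiniteMeasure (margGNonzero G i) :=
    isFiniteMeasure_of_le _ (hc ▸ Measure.le_add_right le_rfl)
  -- the mass at `0` is forced by both sides being probability measures
  rw [Measure.eq_add_one_sub_smul_dirac hc, margG_eq_margGNonzero_add]

def cheap (p : Fin n → ℝ≥0∞) : Finset (Fin n) := {i | p i ≤ ENNReal.ofReal (level n i)}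

def cheapBelow (p : Fin n → ℝ≥0∞) (j : Fin n) : Finset (Fin n) :=
  {i ∈ cheap p | i < j ∧ G.Adj i j}

/-- A slot `S` of `j` from which the seller may earn up to `level n j`. -/
abbrev Unguarded (p : Fin n → ℝ≥0∞) (j : Fin n) (S : Finset (Fin n)) : Prop :=
  (∀ i ∈ S, i ∉ cheap p) ∧ (j ∈ cheap p ∨ S.Nonempty)

theorem slotMass_mul_revenue_le (B : BuyerRule n) (p : Fin n → ℝ≥0∞) {j : Fin n}
    {S : Finset (Fin n)} (hS : ∀ i ∈ S, i < j) :
    slotMass n j * B.revenue p (profile (level n j) (insert j S)) ≤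
      ENNReal.ofReal ((2 ^ n)⁻¹ / Real.sqrt n) +
        if Unguarded p j S then ENNReal.ofReal (Real.sqrt n)⁻¹ else 0 := by
  have hlevel := (level_pos n j).le
  by_cases hcheap : ∃ i ∈ S, i ∈ cheap p
  · obtain ⟨i, hiS, hi⟩ := hcheap
    have hpi : p i ≤ ENNReal.ofReal (level n j * (2 ^ n)⁻¹) :=
      (mem_filter.mp hi).2.trans (ENNReal.ofReal_le_ofReal ((le_mul_inv_iff₀ (by positivity)).mpr
        (level_mul_two_pow_le (hS i hiS))))
    calc slotMass n j * B.revenue p (profile (level n j) (insert j S))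
        ≤ slotMass n j * ENNReal.ofReal (level n j * (2 ^ n)⁻¹) := by
          gcongr
          exact (B.revenue_profile_le_price p hlevel (mem_insert_of_mem hiS)).trans hpi
      _ = ENNReal.ofReal ((2 ^ n)⁻¹ / Real.sqrt n) := slotMass_mul_ofReal_level j _
      _ ≤ _ := le_self_add
  have hS_expensive : ∀ i ∈ S, i ∉ cheap p := fun i hi hc => hcheap ⟨i, hi, hc⟩
  split_ifs with hunguarded
  · calc slotMass n j * B.revenue p (profile (level n j) (insert j S))
        ≤ slotMass n j * ENNReal.ofReal (level n j * 1) := by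
          gcongr
          simpa using B.revenue_profile_le p hlevel
      _ = ENNReal.ofReal (Real.sqrt n)⁻¹ := by rw [slotMass_mul_ofReal_level, one_div]
      _ ≤ _ := le_add_self
  · obtain ⟨hj, hS⟩ : j ∉ cheap p ∧ S = ∅ := by
      simpa [not_nonempty_iff_eq_empty] using not_and.mp hunguarded hS_expensive
    rw [B.revenue_profile_eq_zero p (by simpa [hS, cheap] using hj), mul_zero]
    exact zero_le

theorem card_unguarded_slots_le [NeZero m] (p : Fin n → ℝ≥0∞) (l : Fin n → Fin m) (j : Fin n)
    (hl : min #(cheapBelow G p j) m ≤ #((cheapBelow G p j).image l))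
    (hl0 : ∀ i ∉ cheapBelow G p j, l i = 0) :
    #{t | Unguarded p j (slot G l j t)} ≤
      (if j ∈ cheap p then m - #(cheapBelow G p j) else 0) + 1 := by
  have hslot : ∀ t i, i ∈ slot G l j t ↔ i < j ∧ G.Adj i j ∧ l i = t := by simp [slot]
  split_ifs with hj
  · calc _ ≤ #(univ \ (cheapBelow G p j).image l) := card_le_card fun t ht => ?_
      _ ≤ m - #(cheapBelow G p j) + 1 := by rw [card_univ_sdiff, Fintype.card_fin]; omega
    simp only [mem_filter, mem_univ, true_and] at ht
    simp only [mem_sdiff, mem_univ, true_and, mem_image, not_exists, not_and]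
    intro i hi hit
    obtain ⟨hic, hij, hadj⟩ := mem_filter.mp hi
    exact ht.1 i ((hslot t i).mpr ⟨hij, hadj, hit⟩) hic
  · calc _ ≤ #({0} : Finset (Fin m)) := card_le_card fun t ht => ?_
      _ = 0 + 1 := rfl
    simp only [Unguarded, mem_filter, mem_univ, true_and, hj, false_or] at ht
    obtain ⟨i, hi⟩ := ht.2
    rw [mem_singleton, ← ((hslot t i).mp hi).2.2]
    exact hl0 i fun hib => ht.1 i hi (mem_filter.mp hib).1

theorem sum_slotMass_mul_revenue_le [NeZero m] (hm : Real.sqrt n = m) (B : BuyerRule n)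
    (p : Fin n → ℝ≥0∞) (l : Fin n → Fin m) (j : Fin n)
    (hl : min #(cheapBelow G p j) m ≤ #((cheapBelow G p j).image l))
    (hl0 : ∀ i ∉ cheapBelow G p j, l i = 0) :
    ∑ t, slotMass n j * B.revenue p (profile (level n j) (insert j (slot G l j t))) ≤
      ENNReal.ofReal ((2 ^ n)⁻¹ +
        ((if j ∈ cheap p then m - #(cheapBelow G p j) else 0) + 1 : ℕ) / Real.sqrt n) := by
  calc _ ≤ ∑ t, (ENNReal.ofReal ((2 ^ n)⁻¹ / Real.sqrt n) +
          if Unguarded p j (slot G l j t) then ENNReal.ofReal (Real.sqrt n)⁻¹ else 0) :=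
        sum_le_sum fun t _ => slotMass_mul_revenue_le B p fun i hi => by
          simp only [slot, mem_filter] at hi; exact hi.2.1
    _ = m * ENNReal.ofReal ((2 ^ n)⁻¹ / Real.sqrt n) +
          #{t | Unguarded p j (slot G l j t)} * ENNReal.ofReal (Real.sqrt n)⁻¹ := by
        rw [sum_add_distrib, ← sum_filter, sum_const, sum_const, card_univ, Fintype.card_fin,
          nsmul_eq_mul, nsmul_eq_mul]
    _ ≤ ENNReal.ofReal (2 ^ n)⁻¹ +
          ((if j ∈ cheap p then m - #(cheapBelow G p j) else 0) + 1 : ℕ) *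
            ENNReal.ofReal (Real.sqrt n)⁻¹ := by
        rw [natCast_mul_ofReal_div_sqrt hm]
        gcongr
        exact_mod_cast card_unguarded_slots_le G p l j hl hl0
    _ = _ := by
        rw [ENNReal.ofReal_add (by positivity) (by positivity), div_eq_mul_inv,
          ENNReal.ofReal_mul (by positivity), ENNReal.ofReal_natCast]

theorem expRev_adversary_le [NeZero m] (hm : Real.sqrt n = m) (B : BuyerRule n)
    (p : Fin n → ℝ≥0∞) (l : Fin n → Fin n → Fin m)
    (hl : ∀ j, min #(cheapBelow G p j) m ≤ #((cheapBelow G p j).image (l j)))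
    (hl0 : ∀ j, ∀ i ∉ cheapBelow G p j, l j i = 0) {α : ℕ}
    (hα : ∀ S : Finset (Fin n), (∀ a ∈ S, ∀ b ∈ S, ¬ G.Adj a b) → #S ≤ α) :
    expRev B p (adversary G l) ≤ ENNReal.ofReal ((α + 1) * Real.sqrt n + n * (2 ^ n)⁻¹) := by
  set N : Fin n → ℕ := fun j => (if j ∈ cheap p then m - #(cheapBelow G p j) else 0) + 1
  have hN : ∑ j, N j ≤ α * (m * m) + n := by
    rw [sum_add_distrib, sum_ite_mem, univ_inter, sum_const, card_univ, Fintype.card_fin,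
      smul_eq_mul, mul_one]
    exact Nat.add_le_add_right (G.sum_tsub_card_lower_adj_le _ hα m) n
  have hn : (n : ℝ) = m * m := by rw [← Real.sq_sqrt n.cast_nonneg, hm, sq]
  have hexp : expRev B p (adversary G l) = ∑ j : Fin n, ∑ t : Fin m,
      slotMass n j * B.revenue p (profile (level n j) (insert j (slot G (l j) j t))) := by
    simp only [expRev, adversary, lintegral_add_measure, lintegral_finsetSum_measure,
      lintegral_smul_measure, lintegral_dirac, smul_eq_mul, B.revenue_zero, mul_zero, add_zero]
  calc expRev B p (adversary G l)
      ≤ ∑ j, ENNReal.ofReal ((2 ^ n)⁻¹ + (N j : ℕ) / Real.sqrt n) := hexp ▸ sum_le_sum fun j _ =>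
        sum_slotMass_mul_revenue_le G hm B p (l j) j (hl j) (hl0 j)
    _ = ENNReal.ofReal (n * (2 ^ n)⁻¹ + (∑ j, N j : ℕ) / Real.sqrt n) := by
        rw [← ENNReal.ofReal_sum_of_nonneg fun j _ => by positivity, sum_add_distrib, ← sum_div,
          sum_const, card_univ, Fintype.card_fin, nsmul_eq_mul, Nat.cast_sum]
    _ ≤ _ := by
        refine ENNReal.ofReal_le_ofReal ?_
        have hN' : ((∑ j, N j : ℕ) : ℝ) ≤ ((α * (m * m) + n : ℕ) : ℝ) := Nat.cast_le.mpr hN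
        rw [Nat.cast_add, Nat.cast_mul, Nat.cast_mul, hn] at hN'
        have hm0 : (0 : ℝ) < m := Nat.cast_pos.mpr (Nat.pos_of_ne_zero (NeZero.ne m))
        have : ((∑ j, N j : ℕ) : ℝ) / m ≤ (α + 1) * m := (div_le_iff₀ hm0).mpr (by linarith)
        rw [hm]
        linarith

end MaxMinPricing

theorem max_independent_set_gives_robust_revenue_upper_bound_general
    (n : ℕ) (hn : 0 < n) (hsq : ∃ m : ℕ, n = m * m)
    (G : SimpleGraph (Fin n)) [DecidableRel G.Adj]
    (B : BuyerRule n)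
    (M : Finset (Fin n))
    (hMmax : ∀ S : Finset (Fin n), (∀ i ∈ S, ∀ j ∈ S, ¬ G.Adj i j) → S.card ≤ M.card) :
    optRobust B (margG n G) ≤
      ENNReal.ofReal ((M.card + 2) * Real.sqrt n + 3 * n * ((2 : ℝ) ^ n)⁻¹) := by
  obtain ⟨m, hnm⟩ := hsq
  have hm : Real.sqrt n = m := by rw [hnm, Nat.cast_mul, Real.sqrt_mul_self m.cast_nonneg]
  have : NeZero m := ⟨by rintro rfl; omega⟩
  refine iSup_le fun p => ?_
  choose l hl hl0 using fun j : Fin n =>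
    Finset.exists_min_card_le_card_image (MaxMinPricing.cheapBelow G p j) m
  calc robustRev B (margG n G) p
      ≤ expRev B p (MaxMinPricing.adversary G l) :=
        iInf₂_le _ (MaxMinPricing.compatible_adversary G hm l)
    _ ≤ ENNReal.ofReal ((M.card + 1) * Real.sqrt n + n * (2 ^ n)⁻¹) :=
        MaxMinPricing.expRev_adversary_le G hm B p l hl hl0 hMmax
    _ ≤ _ := ENNReal.ofReal_le_ofReal (by
        have : (0 : ℝ) ≤ Real.sqrt n := Real.sqrt_nonneg n
        have : (0 : ℝ) ≤ n * (2 ^ n)⁻¹ := by positivity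
        nlinarith)

/-- If `M` is a maximum independent set of the graph `G`, then for the
hardness instance with marginals `F_i(G)`, the optimal robust revenue guarantee satisfies
`R*(G) ≤ (|M| + 2)·√n + 3n·2^(−n)`. -/
theorem max_independent_set_gives_robust_revenue_upper_bound
    (n : ℕ) (hn : 0 < n) (hsq : ∃ m : ℕ, n = m * m)
    (G : SimpleGraph (Fin n)) [DecidableRel G.Adj]
    (B : BuyerRule n)
    (M : Finset (Fin n)) (hM : ∀ i ∈ M, ∀ j ∈ M, ¬ G.Adj i j)
    (hMmax : ∀ S : Finset (Fin n), (∀ i ∈ S, ∀ j ∈ S, ¬ G.Adj i j) → S.card ≤ M.card) :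
    optRobust B (margG n G) ≤
      ENNReal.ofReal ((M.card + 2) * Real.sqrt n + 3 * n * ((2 : ℝ) ^ n)⁻¹) :=
  max_independent_set_gives_robust_revenue_upper_bound_general n hn hsq G B M hMmax
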